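/- arXiv:2404.18281 — 2 statements merged into one kernel-verified Lean document; each statement's English description precedes it below -/
import Mathlib

section
/- For all integers 1 ≤ j ≤ k, H(k,j) = H(k,j−1) + (−1)^k H(k−1,j−1) − (−1)^j 𝔾_{k−1}. -/
open Filter Finset Real

/-- Genocchi numbers `G_n := 2(1 − 2ⁿ)Bₙ`, with Bernoulli numbers `B_1 = -1/2`. -/
def Gnum (n : ℕ) : ℚ := 2 * (1 - 2 ^ n) * bernoulli n

/-- `𝔾_n := (−1)^{⌊n/2⌋} G_n`. -/
def GGnum (n : ℕ) : ℚ := (-1) ^ (n / 2) * Gnum n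

/-- `h(j,n) := ∑_{u=n}^{j} (−1)^{j−u} binom(u−1, n−1)`. -/
def hnum (j n : ℕ) : ℤ :=
  ∑ u ∈ Finset.Icc n j, (-1 : ℤ) ^ (j - u) * ((u - 1).choose (n - 1))

/-- `H(k,j) := (−1)^{⌊(k−1)/2⌋} ∑_{n=1}^{j} h(j,n) G_{k−n}` (floor over ℤ). -/
def Hcal (k j : ℕ) : ℚ :=
  (-1 : ℚ) ^ (Int.fdiv ((k : ℤ) - 1) 2) *
    ∑ n ∈ Finset.Icc 1 j, (hnum j n : ℚ) * Gnum (k - n)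

/-!
Peeling off the top term of the alternating sum gives `h(j+1,n+1) = C(j,n) - h(j,n+1)`; with
Pascal's rule this yields, by induction on `j`, `h(j+1,n+2) = h(j,n+2) + h(j,n+1)` and
`h(j+1,1) = h(j,1) + (-1)^j`. So `∑ₙ h(j+1,n) f(n)` is the same sum for `j`, plus the one
for `j` with `f` shifted by one, plus `(-1)^j f(1)`. For `f(n) = G_{k-n}` these give `H(k,j-1)`,
`H(k-1,j-1)` and `𝔾_{k-1}`, because the sign `(-1)^{⌊(k-1)/2⌋}` for `k` is `(-1)^k` times the
one for `k-1`.
-/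

lemma hnum_eq_zero_of_lt {j n : ℕ} (h : j < n) : hnum j n = 0 := by
  rw [hnum, Icc_eq_empty_of_lt h, sum_empty]

lemma hnum_succ (j n : ℕ) : hnum (j + 1) (n + 1) = (j.choose n : ℤ) - hnum j (n + 1) := by
  rcases le_or_gt n j with hn | hn
  · rw [hnum, sum_Icc_succ_top (by omega), hnum, Nat.sub_self, pow_zero, one_mul,
      Nat.add_sub_cancel, Nat.add_sub_cancel, sub_eq_add_neg, ← sum_neg_distrib, add_comm]
    congr 1
    refine sum_congr rfl fun u hu => ?_
    rw [Nat.sub_add_comm (mem_Icc.1 hu).2, pow_succ]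
    ring
  · rw [hnum_eq_zero_of_lt (by omega), hnum_eq_zero_of_lt (by omega), Nat.choose_eq_zero_of_lt hn]
    simp

lemma hnum_succ_add_two (j n : ℕ) : hnum (j + 1) (n + 2) = hnum j (n + 2) + hnum j (n + 1) := by
  induction j generalizing n with
  | zero => simp [hnum_eq_zero_of_lt]
  | succ j ih =>
    have pascal : ((j + 1).choose (n + 1) : ℤ) = j.choose n + j.choose (n + 1) := by
      exact_mod_cast Nat.choose_succ_succ' j n
    linear_combination
      hnum_succ (j + 1) (n + 1) + pascal - hnum_succ j n - hnum_succ j (n + 1) - ih n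

lemma hnum_succ_one (j : ℕ) : hnum (j + 1) 1 = hnum j 1 + (-1) ^ j := by
  induction j with
  | zero => simp [hnum]
  | succ j ih =>
    have h₁ := hnum_succ (j + 1) 0
    have h₀ := hnum_succ j 0
    simp only [Nat.choose_zero_right, Nat.cast_one] at h₁ h₀
    linear_combination h₁ - h₀ - ih

lemma sum_Icc_one_eq_sum_range {M : Type*} [AddCommMonoid M] (g : ℕ → M) (j : ℕ) :
    ∑ n ∈ Icc 1 j, g n = ∑ i ∈ range j, g (i + 1) := by
  rw [← Ico_add_one_right_eq_Icc, sum_Ico_eq_sum_range, Nat.add_sub_cancel]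
  simp only [add_comm 1]

lemma sum_hnum_succ_mul {R : Type*} [CommRing R] (j : ℕ) (f : ℕ → R) :
    ∑ n ∈ Icc 1 (j + 1), (hnum (j + 1) n : R) * f n =
      ∑ n ∈ Icc 1 j, (hnum j n : R) * f n + ∑ n ∈ Icc 1 j, (hnum j n : R) * f (n + 1) +
        (-1) ^ j * f 1 := by
  have extend :
      ∑ n ∈ Icc 1 j, (hnum j n : R) * f n = ∑ n ∈ Icc 1 (j + 1), (hnum j n : R) * f n := by
    rw [sum_Icc_succ_top (by omega), hnum_eq_zero_of_lt (Nat.lt_succ_self j)]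
    simp
  simp only [extend, sum_Icc_one_eq_sum_range, sum_range_succ', zero_add, hnum_succ_add_two,
    hnum_succ_one]
  push_cast
  simp only [add_mul, sum_add_distrib]
  ring

lemma neg_one_zpow_eq_of_even_sub {R : Type*} [DivisionRing R] {a b : ℤ} (h : Even (a - b)) :
    (-1 : R) ^ a = (-1) ^ b := by
  rw [← Int.cast_negOnePow, ← Int.cast_negOnePow, (Int.negOnePow_eq_iff a b).2 h]

lemma neg_one_zpow_fdiv_succ {R : Type*} [DivisionRing R] (k : ℕ) :
    (-1 : R) ^ Int.fdiv ((k + 1 : ℕ) - 1) 2 =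
      (-1) ^ (k + 1) * (-1) ^ Int.fdiv ((k : ℤ) - 1) 2 := by
  rw [← zpow_natCast, ← zpow_add₀ (by norm_num)]
  apply neg_one_zpow_eq_of_even_sub
  rw [Int.fdiv_eq_ediv_of_nonneg _ zero_le_two, Int.fdiv_eq_ediv_of_nonneg _ zero_le_two,
    Int.even_iff]
  omega

lemma neg_one_zpow_fdiv_succ_eq_pow {R : Type*} [DivisionRing R] (k : ℕ) :
    (-1 : R) ^ Int.fdiv ((k + 1 : ℕ) - 1) 2 = (-1) ^ (k / 2) := by
  rw [← zpow_natCast, Int.fdiv_eq_ediv_of_nonneg _ zero_le_two]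
  congr 1
  omega

/-- For all integers `1 ≤ j ≤ k`,
`H(k,j) = H(k,j−1) + (−1)^k H(k−1,j−1) − (−1)^j 𝔾_{k−1}`. -/
theorem Hcal_recurrence (k j : ℕ) (hj : 1 ≤ j) (hjk : j ≤ k) :
    Hcal k j =
      Hcal k (j - 1) + (-1 : ℚ) ^ k * Hcal (k - 1) (j - 1) -
        (-1 : ℚ) ^ j * GGnum (k - 1) := by
  obtain ⟨J, rfl⟩ : ∃ J, j = J + 1 := ⟨j - 1, by omega⟩
  obtain ⟨K, rfl⟩ : ∃ K, k = K + 1 := ⟨k - 1, by omega⟩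
  simp only [Hcal, GGnum, Nat.add_sub_cancel]
  rw [sum_hnum_succ_mul]
  simp only [Nat.add_sub_add_right, Nat.add_sub_cancel]
  rw [← mul_assoc, ← neg_one_zpow_fdiv_succ, neg_one_zpow_fdiv_succ_eq_pow]
  ring
end

section
/- For every integer k ≥ 0, G(k,k) = 2·𝔾_k if k is even and G(k,k) = 0 if k is odd; that is, G(k,k) = 2·δ_{k even}·𝔾_k. -/
/-!
With `B(t) = t / (eᵗ - 1)` the Bernoulli series, the Genocchi series is
`G(t) = 2B(t) - 2B(2t) = 2t / (eᵗ + 1)`, so `G(t) (eᵗ + 1) = 2t`. Comparing coefficients gives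
`∑_{m<k} C(k,m) G_m + 2 G_k = 2 [k = 1]`, and after the reflection `n ↦ k - n` the sum defining
`G(k,k)` is exactly this binomial sum. The odd case then reduces to `G_1 = 1` and `G_k = 0` for
odd `k > 1`, the even case to the sign `⌊(k - 1)/2⌋ = k/2 - 1`, which holds for `k = 0` too.
-/

open Filter Finset Real

/-- `G(k,j) := (−1)^{⌊(k−1)/2⌋} ∑_{n=1}^{j} binom(j,n) G_{k−n}` (floor over ℤ). -/
def Gcal (k j : ℕ) : ℚ :=
  (-1 : ℚ) ^ (Int.fdiv ((k : ℤ) - 1) 2) *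
    ∑ n ∈ Finset.Icc 1 j, (j.choose n : ℚ) * Gnum (k - n)

open PowerSeries Nat

theorem sum_Icc_choose_mul_sub {R : Type*} [Semiring R] (f : ℕ → R) (k : ℕ) :
    ∑ n ∈ Icc 1 k, (k.choose n : R) * f (k - n) = ∑ m ∈ range k, k.choose m * f m := by
  rw [← Ico_add_one_right_eq_Icc]
  calc ∑ n ∈ Ico 1 (k + 1), (k.choose n : R) * f (k - n)
      = ∑ n ∈ Ico 1 (k + 1), (k.choose (k - n) : R) * f (k - n) :=
        sum_congr rfl fun n hn => by rw [Nat.choose_symm (Nat.le_of_lt_succ (mem_Ico.mp hn).2)]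
    _ = ∑ m ∈ range k, k.choose m * f m := by
        rw [sum_Ico_reflect (fun m => (k.choose m : R) * f m) 1 le_rfl, range_eq_Ico]
        simp

theorem factorial_mul_coeff_mul_exp (a : ℕ → ℚ) (k : ℕ) :
    k ! * coeff k (mk (fun n => a n / n !) * exp ℚ) =
      ∑ m ∈ range (k + 1), k.choose m * a m := by
  rw [coeff_mul, Nat.sum_antidiagonal_eq_sum_range_succ_mk, mul_sum]
  refine sum_congr rfl fun m hm => ?_
  have hmk : m ≤ k := Nat.lt_succ_iff.mp (mem_range.mp hm)
  rw [coeff_mk, coeff_exp, Algebra.algebraMap_self_apply, Nat.cast_choose ℚ hmk]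
  field_simp

theorem Gnum_one : Gnum 1 = 1 := by
  norm_num [Gnum]

theorem Gnum_eq_zero_of_odd {n : ℕ} (h_odd : Odd n) (hlt : 1 < n) : Gnum n = 0 := by
  rw [Gnum, bernoulli_eq_zero_of_odd h_odd hlt, mul_zero]

noncomputable def genocchiPowerSeries : ℚ⟦X⟧ := mk fun n => Gnum n / n !

theorem genocchiPowerSeries_eq :
    genocchiPowerSeries =
      2 * (bernoulliPowerSeries ℚ - rescale 2 (bernoulliPowerSeries ℚ)) := by
  ext n
  rw [← map_ofNat C 2]
  simp only [genocchiPowerSeries, bernoulliPowerSeries, Gnum, coeff_mk, coeff_C_mul, map_sub,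
    coeff_rescale, Algebra.algebraMap_self_apply]
  ring

theorem genocchiPowerSeries_mul_exp_add_one :
    genocchiPowerSeries * (exp ℚ + 1) = 2 * X := by
  set B := bernoulliPowerSeries ℚ
  have hB : B * (exp ℚ - 1) = X := bernoulliPowerSeries_mul_exp_sub_one ℚ
  have hB2 : rescale 2 B * (exp ℚ ^ 2 - 1) = 2 * X := by
    have h := congrArg (rescale (2 : ℚ)) hB
    rwa [map_mul, map_sub, map_one, rescale_X, map_ofNat, ← Nat.cast_ofNat,
      ← exp_pow_eq_rescale_exp] at h
  have hexp : exp ℚ - 1 ≠ 0 := fun h => by simpa using congrArg (coeff 1) h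
  refine mul_right_cancel₀ hexp ?_
  rw [genocchiPowerSeries_eq]
  linear_combination 2 * (exp ℚ + 1) * hB - 2 * hB2

theorem sum_range_choose_mul_Gnum_add (k : ℕ) :
    ∑ m ∈ range k, k.choose m * Gnum m + 2 * Gnum k = if k = 1 then 2 else 0 := by
  have h := congrArg (fun f => (k ! : ℚ) * coeff k f) genocchiPowerSeries_mul_exp_add_one
  simp only [mul_add, mul_one, map_add] at h
  rw [genocchiPowerSeries, factorial_mul_coeff_mul_exp, sum_range_succ, choose_self,
    cast_one, one_mul, coeff_mk, mul_div_cancel₀ _ (by positivity), ← map_ofNat C 2,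
    coeff_C_mul, coeff_X] at h
  have hrhs : (k ! : ℚ) * (2 * if k = 1 then 1 else 0) = if k = 1 then 2 else 0 := by
    split_ifs with hk <;> simp [hk]
  linear_combination h.trans hrhs

/-- For every integer `k ≥ 0`, `G(k,k) = 2𝔾_k` if `k` is even and `G(k,k) = 0`
if `k` is odd. -/
theorem Gcal_diag (k : ℕ) :
    Gcal k k = if Even k then 2 * GGnum k else 0 := by
  rw [Gcal, sum_Icc_choose_mul_sub, eq_sub_of_add_eq (sum_range_choose_mul_Gnum_add k)]
  rcases Nat.even_or_odd' k with ⟨j, rfl | rfl⟩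
  · have hfdiv : Int.fdiv ((2 * j : ℕ) - 1) 2 = (j : ℤ) - 1 := by
      rw [Int.fdiv_eq_ediv_of_nonneg _ zero_le_two]; omega
    rw [if_pos (even_two_mul j), if_neg (by omega), hfdiv, zpow_sub_one₀ (by norm_num), GGnum,
      Nat.mul_div_cancel_left j two_pos, zpow_natCast]
    ring
  · rw [if_neg (Nat.not_even_iff_odd.mpr (odd_two_mul_add_one j))]
    rcases eq_or_ne j 0 with rfl | hj
    · simp [Gnum_one]
    · rw [if_neg (by omega), Gnum_eq_zero_of_odd (odd_two_mul_add_one j) (by omega)]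
      ring
end
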